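/- arXiv:1210.5300 — 4 statements merged into one kernel-verified Lean document; each statement's English description precedes it below -/
import Mathlib

section
/- (Weak duality) For every σ ∈ S_a⁺ (i.e. σ ≥ 0 and G(σ) positive definite) and every x ∈ C, one has P^d(σ) ≤ P(x). -/
open Matrix

/-- The Lorentz matrix `L₀ = diag(−1, I_{n−1})`. -/
noncomputable def L0 (n : ℕ) [NeZero n] : Matrix (Fin n) (Fin n) ℝ :=
  Matrix.diagonal (fun i => if i = 0 then (-1 : ℝ) else 1)

/-- The Lorentz cone `C = {x : ‖x₂‖ ≤ x₁, x₁ > 0}`, with the Euclidean norm of the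
tail written as the square root of the sum of squares. -/
noncomputable def lorentzCone (n : ℕ) [NeZero n] : Set (Fin n → ℝ) :=
  {x | Real.sqrt (∑ i ∈ Finset.univ \ {(0 : Fin n)}, (x i) ^ 2) ≤ x 0 ∧ 0 < x 0}

/-- The primal objective `P(x) = ½ xᵀQx − cᵀx`. -/
noncomputable def Pobj (n : ℕ) (Q : Matrix (Fin n) (Fin n) ℝ) (c : Fin n → ℝ)
    (x : Fin n → ℝ) : ℝ :=
  (1 / 2) * (x ⬝ᵥ (Q *ᵥ x)) - c ⬝ᵥ x

/-- `G(σ) = Q + σ L₀`. -/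
noncomputable def Gm (n : ℕ) [NeZero n] (Q : Matrix (Fin n) (Fin n) ℝ) (σ : ℝ) :
    Matrix (Fin n) (Fin n) ℝ :=
  Q + σ • L0 n

/-- The total complementary function `Ξ(x, σ) = ½ xᵀG(σ)x − cᵀx`. -/
noncomputable def Xi (n : ℕ) [NeZero n] (Q : Matrix (Fin n) (Fin n) ℝ) (c : Fin n → ℝ)
    (x : Fin n → ℝ) (σ : ℝ) : ℝ :=
  (1 / 2) * (x ⬝ᵥ ((Gm n Q σ) *ᵥ x)) - c ⬝ᵥ x

/-- The canonical dual objective `P^d(σ) = −½ cᵀG(σ)⁻¹c`. -/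
noncomputable def Pd (n : ℕ) [NeZero n] (Q : Matrix (Fin n) (Fin n) ℝ) (c : Fin n → ℝ)
    (σ : ℝ) : ℝ :=
  -(1 / 2) * (c ⬝ᵥ ((Gm n Q σ)⁻¹ *ᵥ c))

/-- Weak duality: for every `σ ∈ S_a⁺` (`σ ≥ 0` and `G(σ) ≻ 0`) and every
`x ∈ C`, `P^d(σ) ≤ P(x)`. -/
theorem weak_duality {n : ℕ} [NeZero n] (hn : 2 ≤ n)
    (Q : Matrix (Fin n) (Fin n) ℝ) (hQ : Q.IsSymm) (c : Fin n → ℝ)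
    (σ : ℝ) (hσ : 0 ≤ σ) (hG : (Gm n Q σ).PosDef)
    (x : Fin n → ℝ) (hx : x ∈ lorentzCone n) :
    Pd n Q c σ ≤ Pobj n Q c x := by
  set G := Gm n Q σ with hGdef
  have hsym : Gᵀ = G := by
    rw [hGdef, Gm, Matrix.transpose_add, Matrix.transpose_smul, L0,
      Matrix.diagonal_transpose, hQ]
  have hdet : IsUnit G.det := isUnit_iff_ne_zero.mpr (ne_of_gt hG.det_pos)
  set u := G⁻¹ *ᵥ c with hu
  have hGu : G *ᵥ u = c := by
    rw [hu, Matrix.mulVec_mulVec, Matrix.mul_nonsing_inv _ hdet, Matrix.one_mulVec]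
  -- step 1 : the Lorentz quadratic form is nonpositive on the cone
  have hquad : x ⬝ᵥ (L0 n *ᵥ x) ≤ 0 := by
    obtain ⟨h1, h2⟩ := hx
    have hSnn : 0 ≤ ∑ i ∈ Finset.univ \ {(0 : Fin n)}, (x i) ^ 2 :=
      Finset.sum_nonneg fun i _ => sq_nonneg _
    have hS : (∑ i ∈ Finset.univ \ {(0 : Fin n)}, (x i) ^ 2) ≤ (x 0) ^ 2 := by
      calc (∑ i ∈ Finset.univ \ {(0 : Fin n)}, (x i) ^ 2)
          = (Real.sqrt (∑ i ∈ Finset.univ \ {(0 : Fin n)}, (x i) ^ 2)) ^ 2 := by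
            rw [Real.sq_sqrt hSnn]
        _ ≤ (x 0) ^ 2 := pow_le_pow_left₀ (Real.sqrt_nonneg _) h1 2
    have hev : x ⬝ᵥ (L0 n *ᵥ x) =
        (∑ i ∈ Finset.univ \ {(0 : Fin n)}, (x i) ^ 2) - (x 0) ^ 2 := by
      simp only [L0, Matrix.mulVec_diagonal, dotProduct]
      rw [Finset.sum_eq_add_sum_sdiff_singleton_of_mem (Finset.mem_univ (0 : Fin n))
        (fun i => x i * ((if i = 0 then (-1 : ℝ) else 1) * x i))]
      have hcg : ∀ i ∈ Finset.univ \ {(0 : Fin n)},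
          x i * ((if i = 0 then (-1 : ℝ) else 1) * x i) = (x i) ^ 2 := by
        intro i hi
        rw [Finset.mem_sdiff, Finset.mem_singleton] at hi
        simp [hi.2]; ring
      rw [Finset.sum_congr rfl hcg]
      simp; ring
    rw [hev]
    linarith
  -- decompose the quadratic form of G
  have hsplit : x ⬝ᵥ (G *ᵥ x) = x ⬝ᵥ (Q *ᵥ x) + σ * (x ⬝ᵥ (L0 n *ᵥ x)) := by
    rw [hGdef, Gm, Matrix.add_mulVec, dotProduct_add,
      Matrix.smul_mulVec, dotProduct_smul, smul_eq_mul]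
  -- step 2 : Pd ≤ Xi via completing the square
  have hy : 0 ≤ (x - u) ⬝ᵥ (G *ᵥ (x - u)) := by
    simpa using hG.posSemidef.re_dotProduct_nonneg (x - u)
  have hGy : G *ᵥ (x - u) = G *ᵥ x - c := by
    rw [Matrix.mulVec_sub, hGu]
  have hux : u ⬝ᵥ (G *ᵥ x) = c ⬝ᵥ x := by
    rw [Matrix.dotProduct_mulVec, ← Matrix.mulVec_transpose, hsym, hGu]
  have huc : u ⬝ᵥ c = c ⬝ᵥ u := dotProduct_comm _ _
  have hxc : x ⬝ᵥ c = c ⬝ᵥ x := dotProduct_comm _ _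
  have hexpand : (x - u) ⬝ᵥ (G *ᵥ (x - u)) =
      x ⬝ᵥ (G *ᵥ x) - 2 * (c ⬝ᵥ x) + c ⬝ᵥ u := by
    rw [hGy, sub_dotProduct, dotProduct_sub, dotProduct_sub,
      hux, hxc, huc]
    ring
  -- combine
  have key : -(1 / 2) * (c ⬝ᵥ u) ≤ (1 / 2) * (x ⬝ᵥ (G *ᵥ x)) - c ⬝ᵥ x := by
    nlinarith [hy, hexpand]
  have hGP : (1 / 2) * (x ⬝ᵥ (G *ᵥ x)) - c ⬝ᵥ x ≤ Pobj n Q c x := by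
    rw [Pobj, hsplit]
    nlinarith [mul_nonneg hσ (neg_nonneg.mpr hquad)]
  calc Pd n Q c σ = -(1 / 2) * (c ⬝ᵥ u) := rfl
    _ ≤ (1 / 2) * (x ⬝ᵥ (G *ᵥ x)) - c ⬝ᵥ x := key
    _ ≤ Pobj n Q c x := hGP
end

section
/- (Theorem 1) Let σ̄ ∈ S_a (i.e. σ̄ ≥ 0 and det G(σ̄) ≠ 0) and set x̄ = G(σ̄)⁻¹c. Then σ̄ satisfies the dual KKT conditions σ̄ ≥ 0, (P^d)'(σ̄) ≤ 0 and σ̄ · (P^d)'(σ̄) = 0 — where (P^d)'(σ̄) = ½ x̄ᵀL₀x̄ — if and only if x̄ satisfies the primal KKT conditions with multiplier σ̄, namely Qx̄ + σ̄L₀x̄ = c, x̄ᵀL₀x̄ ≤ 0 and σ̄ · (x̄ᵀL₀x̄) = 0. Moreover, in that case P(x̄) = P^d(σ̄). -/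
open Matrix

/-- Theorem 1: for `σ̄ ∈ S_a` and `x̄ = G(σ̄)⁻¹c`, the dual KKT conditions
hold iff the primal KKT conditions hold; and in that case `P(x̄) = P^d(σ̄)`. -/
theorem canonical_duality_KKT {n : ℕ} [NeZero n] (hn : 2 ≤ n)
    (Q : Matrix (Fin n) (Fin n) ℝ) (hQ : Q.IsSymm) (c : Fin n → ℝ)
    (σbar : ℝ) (hσ : 0 ≤ σbar) (hdet : (Gm n Q σbar).det ≠ 0)
    (xbar : Fin n → ℝ) (hx : xbar = (Gm n Q σbar)⁻¹ *ᵥ c) :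
    ((0 ≤ σbar ∧ (1 / 2) * (xbar ⬝ᵥ ((L0 n) *ᵥ xbar)) ≤ 0 ∧
        σbar * ((1 / 2) * (xbar ⬝ᵥ ((L0 n) *ᵥ xbar))) = 0) ↔
      (Q *ᵥ xbar + σbar • ((L0 n) *ᵥ xbar) = c ∧
        xbar ⬝ᵥ ((L0 n) *ᵥ xbar) ≤ 0 ∧ σbar * (xbar ⬝ᵥ ((L0 n) *ᵥ xbar)) = 0)) ∧
    ((Q *ᵥ xbar + σbar • ((L0 n) *ᵥ xbar) = c ∧
        xbar ⬝ᵥ ((L0 n) *ᵥ xbar) ≤ 0 ∧ σbar * (xbar ⬝ᵥ ((L0 n) *ᵥ xbar)) = 0) →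
      Pobj n Q c xbar = Pd n Q c σbar) := by
  have hG : Gm n Q σbar *ᵥ xbar = c := by
    rw [hx, Matrix.mulVec_mulVec, Matrix.mul_nonsing_inv _ (isUnit_iff_ne_zero.mpr hdet),
      Matrix.one_mulVec]
  have hstat : Q *ᵥ xbar + σbar • ((L0 n) *ᵥ xbar) = c := by
    rw [← hG, Gm, Matrix.add_mulVec, Matrix.smul_mulVec]
  constructor
  · constructor
    · rintro ⟨-, h1, h2⟩
      refine ⟨hstat, by linarith, by linarith⟩
    · rintro ⟨-, h1, h2⟩
      exact ⟨hσ, by linarith, by linarith⟩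
  · rintro ⟨-, -, h2⟩
    have hQx : xbar ⬝ᵥ (Q *ᵥ xbar) = c ⬝ᵥ xbar := by
      have := congrArg (fun v => xbar ⬝ᵥ v) hstat
      simp only [dotProduct_add, dotProduct_smul, smul_eq_mul] at this
      rw [dotProduct_comm xbar c] at this
      linarith
    have hcx : c ⬝ᵥ ((Gm n Q σbar)⁻¹ *ᵥ c) = c ⬝ᵥ xbar := by rw [hx]
    rw [Pobj, Pd, hQx, hcx]
    ring
end

section
/- (Theorem 2, global optimality) Suppose σ̄ ≥ 0, G(σ̄) = Q + σ̄L₀ is positive definite, x̄ = G(σ̄)⁻¹c lies in the Lorentz cone C, and the complementarity condition σ̄ · (x̄ᵀL₀x̄) = 0 holds. Then x̄ is a global minimizer of P over C, i.e. P(x̄) ≤ P(x) for all x ∈ C, and P(x̄) = P^d(σ̄). -/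
/-!
Weak duality through the total complementary function `Ξ(x, σ) = P(x) + (σ/2) xᵀL₀x`.
On the Lorentz cone `xᵀL₀x = ‖x₂‖² − x₁² ≤ 0`, so `Ξ(·, σ̄) ≤ P` there when `σ̄ ≥ 0`.
Since `G(σ̄) ≻ 0`, `Ξ(·, σ̄)` is a convex quadratic minimized at its critical point
`x̄ = G(σ̄)⁻¹c`, with value `−½ cᵀx̄ = P^d(σ̄)`; complementarity gives `P(x̄) = Ξ(x̄, σ̄)`.
-/

open Matrix

section QuadraticMinimization

variable {ι : Type*} [Fintype ι] {M : Matrix ι ι ℝ} {a c : ι → ℝ}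

lemma half_quadratic_sub_linear_eq_completeSquare (hM : M.IsSymm) (hMa : M *ᵥ a = c)
    (x : ι → ℝ) :
    1 / 2 * (x ⬝ᵥ M *ᵥ x) - c ⬝ᵥ x =
      1 / 2 * ((x - a) ⬝ᵥ M *ᵥ (x - a)) - 1 / 2 * (c ⬝ᵥ a) := by
  have hax : a ⬝ᵥ M *ᵥ x = c ⬝ᵥ x := by
    rw [dotProduct_mulVec, ← mulVec_transpose, hM.eq, hMa]
  rw [mulVec_sub, sub_dotProduct, dotProduct_sub, dotProduct_sub, hax, hMa,
    dotProduct_comm x c, dotProduct_comm a c]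
  ring

lemma half_quadratic_sub_linear_at_solution (hMa : M *ᵥ a = c) :
    1 / 2 * (a ⬝ᵥ M *ᵥ a) - c ⬝ᵥ a = -(1 / 2) * (c ⬝ᵥ a) := by
  rw [hMa, dotProduct_comm]
  ring

lemma half_quadratic_sub_linear_le (hM : M.PosSemidef) (hMa : M *ᵥ a = c) (x : ι → ℝ) :
    1 / 2 * (a ⬝ᵥ M *ᵥ a) - c ⬝ᵥ a ≤ 1 / 2 * (x ⬝ᵥ M *ᵥ x) - c ⬝ᵥ x := by
  have hsymm : M.IsSymm := isHermitian_iff_isSymm.mp hM.isHermitian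
  have hnonneg : 0 ≤ (x - a) ⬝ᵥ M *ᵥ (x - a) := by
    simpa using hM.dotProduct_mulVec_nonneg (x - a)
  rw [half_quadratic_sub_linear_at_solution hMa,
    half_quadratic_sub_linear_eq_completeSquare hsymm hMa]
  linarith

end QuadraticMinimization

section LorentzCone

variable {n : ℕ} [NeZero n]

lemma dotProduct_L0_mulVec_self (x : Fin n → ℝ) :
    x ⬝ᵥ L0 n *ᵥ x = ∑ i ∈ Finset.univ \ {(0 : Fin n)}, x i ^ 2 - x 0 ^ 2 := by
  simp only [L0, dotProduct, mulVec_diagonal]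
  rw [Finset.sum_eq_add_sum_sdiff_singleton_of_mem (Finset.mem_univ 0),
    Finset.sum_congr rfl (g := fun i => x i ^ 2) fun i hi => ?_]
  · simp only [if_pos]
    ring
  · rw [if_neg (Finset.notMem_singleton.mp (Finset.mem_sdiff.mp hi).2)]
    ring

lemma dotProduct_L0_mulVec_self_nonpos {x : Fin n → ℝ} (hx : x ∈ lorentzCone n) :
    x ⬝ᵥ L0 n *ᵥ x ≤ 0 := by
  obtain ⟨hnorm, hpos⟩ := hx
  rw [dotProduct_L0_mulVec_self, sub_nonpos, ← Real.sqrt_le_left hpos.le]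
  exact hnorm

lemma Pobj_eq_Xi_sub (Q : Matrix (Fin n) (Fin n) ℝ) (c x : Fin n → ℝ) (σ : ℝ) :
    Pobj n Q c x = Xi n Q c x σ - σ / 2 * (x ⬝ᵥ L0 n *ᵥ x) := by
  rw [Pobj, Xi, Gm, add_mulVec, dotProduct_add, smul_mulVec, dotProduct_smul, smul_eq_mul]
  ring

lemma Xi_le_Pobj_of_mem_lorentzCone (Q : Matrix (Fin n) (Fin n) ℝ) (c : Fin n → ℝ) {σ : ℝ}
    (hσ : 0 ≤ σ) {x : Fin n → ℝ} (hx : x ∈ lorentzCone n) : Xi n Q c x σ ≤ Pobj n Q c x := by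
  rw [Pobj_eq_Xi_sub Q c x σ, le_sub_self_iff]
  exact mul_nonpos_of_nonneg_of_nonpos (by positivity) (dotProduct_L0_mulVec_self_nonpos hx)

end LorentzCone

theorem global_optimality_general {n : ℕ} [NeZero n]
    (Q : Matrix (Fin n) (Fin n) ℝ) (c : Fin n → ℝ)
    (σbar : ℝ) (hσ : 0 ≤ σbar) (hG : (Gm n Q σbar).PosDef)
    (xbar : Fin n → ℝ) (hx : xbar = (Gm n Q σbar)⁻¹ *ᵥ c)
    (hcomp : σbar * (xbar ⬝ᵥ ((L0 n) *ᵥ xbar)) = 0) :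
    (∀ x ∈ lorentzCone n, Pobj n Q c xbar ≤ Pobj n Q c x) ∧
    Pobj n Q c xbar = Pd n Q c σbar := by
  have hGx : Gm n Q σbar *ᵥ xbar = c := by
    rw [hx, mulVec_mulVec, mul_nonsing_inv _ ((isUnit_iff_isUnit_det _).mp hG.isUnit),
      one_mulVec]
  have hPXi : Pobj n Q c xbar = Xi n Q c xbar σbar := by
    rw [Pobj_eq_Xi_sub Q c xbar σbar, div_mul_eq_mul_div, hcomp, zero_div, sub_zero]
  refine ⟨fun x hxC => ?_, ?_⟩
  · calc Pobj n Q c xbar = Xi n Q c xbar σbar := hPXi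
      _ ≤ Xi n Q c x σbar := half_quadratic_sub_linear_le hG.posSemidef hGx x
      _ ≤ Pobj n Q c x := Xi_le_Pobj_of_mem_lorentzCone Q c hσ hxC
  · rw [hPXi, Xi, half_quadratic_sub_linear_at_solution hGx, Pd, hx]

/-- Theorem 2, global optimality: if `σ̄ ≥ 0`, `G(σ̄) ≻ 0`,
`x̄ = G(σ̄)⁻¹c ∈ C` and `σ̄ · (x̄ᵀL₀x̄) = 0`, then `x̄` globally minimizes `P` over `C`
and `P(x̄) = P^d(σ̄)`. -/
theorem global_optimality {n : ℕ} [NeZero n] (hn : 2 ≤ n)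
    (Q : Matrix (Fin n) (Fin n) ℝ) (hQ : Q.IsSymm) (c : Fin n → ℝ)
    (σbar : ℝ) (hσ : 0 ≤ σbar) (hG : (Gm n Q σbar).PosDef)
    (xbar : Fin n → ℝ) (hx : xbar = (Gm n Q σbar)⁻¹ *ᵥ c)
    (hxC : xbar ∈ lorentzCone n)
    (hcomp : σbar * (xbar ⬝ᵥ ((L0 n) *ᵥ xbar)) = 0) :
    (∀ x ∈ lorentzCone n, Pobj n Q c xbar ≤ Pobj n Q c x) ∧
    Pobj n Q c xbar = Pd n Q c σbar :=
  global_optimality_general Q c σbar hσ hG xbar hx hcomp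
end

section
/- (Theorem 2, dual optimality and zero duality gap) Suppose σ̄ ≥ 0, G(σ̄) = Q + σ̄L₀ is positive definite, x̄ = G(σ̄)⁻¹c lies in the Lorentz cone C, and σ̄ · (x̄ᵀL₀x̄) = 0. Then σ̄ is a global maximizer of P^d over S_a⁺, i.e. P^d(σ) ≤ P^d(σ̄) for all σ ∈ S_a⁺, and min_{x ∈ C} P(x) = P(x̄) = P^d(σ̄) = max_{σ ∈ S_a⁺} P^d(σ). -/
open Matrix

/-!
Completing the square, `Ξ(x, σ) ≥ P^d(σ)` whenever `G(σ)` is positive definite, with equality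
at `x = G(σ)⁻¹c`. Since `Ξ(x, σ) = P(x) + (σ/2) xᵀL₀x` and `xᵀL₀x ≤ 0` on the Lorentz cone,
`Ξ(x, σ) ≤ P(x)` for `σ ≥ 0` and `x ∈ C`. Complementarity gives `P^d(σ̄) = Ξ(x̄, σ̄) = P(x̄)`, and
then `P^d(σ) ≤ Ξ(x̄, σ) ≤ P(x̄) = P^d(σ̄) ≤ Ξ(x, σ̄) ≤ P(x)` proves both optimality claims.
-/

section CompletingTheSquare

variable {ι : Type*} [Fintype ι]

theorem half_quadratic_sub_linear_eq {G : Matrix ι ι ℝ} (hG : G.IsSymm) {c y : ι → ℝ}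
    (hy : G *ᵥ y = c) (x : ι → ℝ) :
    (1 / 2) * (x ⬝ᵥ (G *ᵥ x)) - c ⬝ᵥ x
      = ((1 / 2) * (y ⬝ᵥ (G *ᵥ y)) - c ⬝ᵥ y) + (1 / 2) * ((x - y) ⬝ᵥ (G *ᵥ (x - y))) := by
  have hc : ∀ v : ι → ℝ, c ⬝ᵥ v = y ⬝ᵥ (G *ᵥ v) := fun v => by
    rw [← hy, dotProduct_comm, dotProduct_mulVec, ← mulVec_transpose, hG, dotProduct_comm]
  have hswap : x ⬝ᵥ (G *ᵥ y) = y ⬝ᵥ (G *ᵥ x) := by rw [← hc, hy, dotProduct_comm]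
  simp only [hc, mulVec_sub, dotProduct_sub, sub_dotProduct, hswap]
  ring

variable [DecidableEq ι]

theorem half_quadratic_sub_linear_inv_mulVec {G : Matrix ι ι ℝ} (hG : IsUnit G.det)
    (c : ι → ℝ) :
    (1 / 2) * ((G⁻¹ *ᵥ c) ⬝ᵥ (G *ᵥ (G⁻¹ *ᵥ c))) - c ⬝ᵥ (G⁻¹ *ᵥ c)
      = -(1 / 2) * (c ⬝ᵥ (G⁻¹ *ᵥ c)) := by
  rw [mulVec_mulVec, mul_nonsing_inv _ hG, one_mulVec, dotProduct_comm _ c]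
  ring

theorem Matrix.PosDef.neg_half_inv_le_half_quadratic_sub_linear {G : Matrix ι ι ℝ}
    (hG : G.PosDef) (c x : ι → ℝ) :
    -(1 / 2) * (c ⬝ᵥ (G⁻¹ *ᵥ c)) ≤ (1 / 2) * (x ⬝ᵥ (G *ᵥ x)) - c ⬝ᵥ x := by
  have hdet : IsUnit G.det := isUnit_iff_ne_zero.mpr hG.det_pos.ne'
  have hsymm : G.IsSymm := by simpa using hG.isHermitian
  have hsolve : G *ᵥ (G⁻¹ *ᵥ c) = c := by rw [mulVec_mulVec, mul_nonsing_inv _ hdet, one_mulVec]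
  have hnonneg : 0 ≤ (x - G⁻¹ *ᵥ c) ⬝ᵥ (G *ᵥ (x - G⁻¹ *ᵥ c)) := by
    simpa using hG.posSemidef.dotProduct_mulVec_nonneg (x - G⁻¹ *ᵥ c)
  rw [half_quadratic_sub_linear_eq hsymm hsolve, half_quadratic_sub_linear_inv_mulVec hdet]
  linarith

end CompletingTheSquare

section LorentzCone

variable {n : ℕ} [NeZero n]

theorem dotProduct_L0_mulVec (x : Fin n → ℝ) :
    x ⬝ᵥ (L0 n *ᵥ x) = -(x 0) ^ 2 + ∑ i ∈ Finset.univ \ {(0 : Fin n)}, (x i) ^ 2 := by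
  have hdiag : x ⬝ᵥ (L0 n *ᵥ x) = ∑ i, x i * ((if i = 0 then (-1 : ℝ) else 1) * x i) := by
    simp [L0, dotProduct, mulVec_diagonal]
  rw [hdiag, ← Finset.add_sum_erase _ _ (Finset.mem_univ 0), Finset.sdiff_singleton_eq_erase]
  congr 1
  · simp [sq]
  · refine Finset.sum_congr rfl fun i hi => ?_
    rw [if_neg (Finset.ne_of_mem_erase hi)]
    ring

theorem dotProduct_L0_mulVec_nonpos {x : Fin n → ℝ} (hx : x ∈ lorentzCone n) :
    x ⬝ᵥ (L0 n *ᵥ x) ≤ 0 := by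
  have htail := (Real.sqrt_le_left hx.2.le).mp hx.1
  rw [dotProduct_L0_mulVec]
  linarith

end LorentzCone

section CanonicalDual

variable {n : ℕ} [NeZero n] (Q : Matrix (Fin n) (Fin n) ℝ) (c : Fin n → ℝ)

theorem Xi_eq_Pobj_add (x : Fin n → ℝ) (σ : ℝ) :
    Xi n Q c x σ = Pobj n Q c x + σ / 2 * (x ⬝ᵥ (L0 n *ᵥ x)) := by
  rw [Xi, Pobj, Gm, add_mulVec, dotProduct_add, smul_mulVec, dotProduct_smul, smul_eq_mul]
  ring

theorem Xi_le_Pobj {σ : ℝ} (hσ : 0 ≤ σ) {x : Fin n → ℝ} (hx : x ∈ lorentzCone n) :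
    Xi n Q c x σ ≤ Pobj n Q c x := by
  rw [Xi_eq_Pobj_add]
  nlinarith [dotProduct_L0_mulVec_nonpos hx]

theorem Pd_le_Xi {σ : ℝ} (hG : (Gm n Q σ).PosDef) (x : Fin n → ℝ) :
    Pd n Q c σ ≤ Xi n Q c x σ :=
  hG.neg_half_inv_le_half_quadratic_sub_linear c x

theorem Xi_inv_mulVec_eq_Pd {σ : ℝ} (hG : IsUnit (Gm n Q σ).det) :
    Xi n Q c ((Gm n Q σ)⁻¹ *ᵥ c) σ = Pd n Q c σ :=
  half_quadratic_sub_linear_inv_mulVec hG c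

end CanonicalDual

theorem dual_optimality_zero_gap_general {n : ℕ} [NeZero n]
    (Q : Matrix (Fin n) (Fin n) ℝ) (c : Fin n → ℝ)
    (σbar : ℝ) (hσ : 0 ≤ σbar) (hG : (Gm n Q σbar).PosDef)
    (xbar : Fin n → ℝ) (hx : xbar = (Gm n Q σbar)⁻¹ *ᵥ c)
    (hxC : xbar ∈ lorentzCone n)
    (hcomp : σbar * (xbar ⬝ᵥ ((L0 n) *ᵥ xbar)) = 0) :
    (∀ σ : ℝ, 0 ≤ σ → (Gm n Q σ).PosDef → Pd n Q c σ ≤ Pd n Q c σbar) ∧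
    (∀ x ∈ lorentzCone n, Pobj n Q c xbar ≤ Pobj n Q c x) ∧
    Pobj n Q c xbar = Pd n Q c σbar := by
  have hgap : Pobj n Q c xbar = Pd n Q c σbar := by
    have hXi := Xi_inv_mulVec_eq_Pd Q c (isUnit_iff_ne_zero.mpr hG.det_pos.ne')
    rw [← hx, Xi_eq_Pobj_add] at hXi
    linarith
  refine ⟨fun σ hσ' hGσ => ?_, fun x hxC' => ?_, hgap⟩
  · calc Pd n Q c σ ≤ Xi n Q c xbar σ := Pd_le_Xi Q c hGσ xbar
      _ ≤ Pobj n Q c xbar := Xi_le_Pobj Q c hσ' hxC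
      _ = Pd n Q c σbar := hgap
  · calc Pobj n Q c xbar = Pd n Q c σbar := hgap
      _ ≤ Xi n Q c x σbar := Pd_le_Xi Q c hG x
      _ ≤ Pobj n Q c x := Xi_le_Pobj Q c hσ hxC'

/-- Theorem 2, dual optimality and zero duality gap: under the same
hypotheses, `σ̄` globally maximizes `P^d` over `S_a⁺`, and
`min_{x ∈ C} P(x) = P(x̄) = P^d(σ̄) = max_{σ ∈ S_a⁺} P^d(σ)`. -/
theorem dual_optimality_zero_gap {n : ℕ} [NeZero n] (hn : 2 ≤ n)
    (Q : Matrix (Fin n) (Fin n) ℝ) (hQ : Q.IsSymm) (c : Fin n → ℝ)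
    (σbar : ℝ) (hσ : 0 ≤ σbar) (hG : (Gm n Q σbar).PosDef)
    (xbar : Fin n → ℝ) (hx : xbar = (Gm n Q σbar)⁻¹ *ᵥ c)
    (hxC : xbar ∈ lorentzCone n)
    (hcomp : σbar * (xbar ⬝ᵥ ((L0 n) *ᵥ xbar)) = 0) :
    (∀ σ : ℝ, 0 ≤ σ → (Gm n Q σ).PosDef → Pd n Q c σ ≤ Pd n Q c σbar) ∧
    (∀ x ∈ lorentzCone n, Pobj n Q c xbar ≤ Pobj n Q c x) ∧
    Pobj n Q c xbar = Pd n Q c σbar :=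
  dual_optimality_zero_gap_general Q c σbar hσ hG xbar hx hxC hcomp
end
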